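/- arXiv:2110.06788 — 3 statements merged into one kernel-verified Lean document; each statement's English description precedes it below -/
import Mathlib

section
/- Let ω be a weight, f a monic polynomial of degree d with simple zeros z₁,…,z_d ∈ ℂ ∖ {0}, p_n the n-th optimal polynomial approximant to 1/f in H²_ω, and d_{k,n} = coeff_k(1 − p_n f). Let E be the d×d matrix with entries e_{l,m} = k_{n+d}(z_l, z_m) and v₀ = (1,…,1) ∈ ℂ^d. Then E is invertible and there is a unique vector A_n = (A_{1,n},…,A_{d,n}) ∈ ℂ^d such that d_{k,n} = (1/ω_k)·∑_{i=1}^d A_{i,n} z̄_i^k for every k = 0,…,n+d; moreover A_nᵗ = E⁻¹ · v₀ᵗ. -/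
open Polynomial Filter Topology MeasureTheory Metric Asymptotics

noncomputable section

/-- A weight: positive, monotone, ω₀ = 1, ω_n/ω_{n-⌊√n⌋} → 1, ∑ 1/ω_k = ∞. -/
def IsWeight (ω : ℕ → ℝ) : Prop :=
  (∀ k, 0 < ω k) ∧ (Monotone ω ∨ Antitone ω) ∧ ω 0 = 1 ∧
    Filter.Tendsto (fun n => ω n / ω (n - Nat.sqrt n)) Filter.atTop (nhds 1) ∧
    ¬ Summable (fun k => 1 / ω k)

/-- Squared H²_ω norm of a polynomial. -/
def wNormSq (ω : ℕ → ℝ) (g : Polynomial ℂ) : ℝ :=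
  ∑ k ∈ Finset.range (g.natDegree + 1), ω k * ‖g.coeff k‖ ^ 2

/-- `p` is the n-th optimal polynomial approximant to `1/f` in `H²_ω`. -/
def IsOPA (ω : ℕ → ℝ) (f : Polynomial ℂ) (n : ℕ) (p : Polynomial ℂ) : Prop :=
  p.degree ≤ (n : ℕ) ∧ ∀ q : Polynomial ℂ, q.degree ≤ (n : ℕ) →
    wNormSq ω (1 - p * f) ≤ wNormSq ω (1 - q * f)

/-- Partial sums `S_N = ∑_{k=0}^N 1/ω_k`. -/
def S (ω : ℕ → ℝ) (N : ℕ) : ℝ := ∑ k ∈ Finset.range (N + 1), 1 / ω k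

/-- Truncated reproducing kernel `k_N(z,b) = ∑_{k=0}^N b̄^k z^k / ω_k`. -/
def kN (ω : ℕ → ℝ) (N : ℕ) (z b : ℂ) : ℂ :=
  ∑ k ∈ Finset.range (N + 1), (starRingEnd ℂ b) ^ k * z ^ k / (ω k : ℂ)

/-- Zero-counting probability measure of a polynomial: the average of Dirac
masses at its roots, counted with multiplicity. -/
def zeroMeasure (q : Polynomial ℂ) : Measure ℂ :=
  (q.natDegree : ENNReal)⁻¹ • (q.roots.map (fun z => Measure.dirac z)).sum

/-- Normalized arclength (uniform) measure on the unit circle. -/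
def nuT : Measure ℂ :=
  (ENNReal.ofReal (2 * Real.pi))⁻¹ •
    Measure.map (fun θ : ℝ => Complex.exp (θ * Complex.I))
      (MeasureTheory.volume.restrict (Set.Ioc 0 (2 * Real.pi)))

/-!
Put `N = n + d` and embed the polynomials of degree `≤ N` isometrically into `ℂ^{N+1}` by scaling
the `k`-th coefficient by `√ω_k`. Optimality of `p_n` says that `1 - p_n f` is orthogonal to every
`q f` with `deg q ≤ n`. The matrix `E` is the Gram matrix of the reproducing kernels `k_N(·, z_i)`,
which are linearly independent by a Vandermonde argument, so `E` is invertible. For `A = E⁻¹ 1`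
the polynomial `G = ∑ A_i k_N(·, z_i)` equals `1` at the zeros of `f`, hence `1 - p_n f - G = r f`
with `deg r ≤ n`. This difference is orthogonal to `1 - p_n f` by optimality and to `G` by the
reproducing property (`r f` vanishes at the `z_i`), so it is zero; the coefficients of `G` give the
formula, and uniqueness of `A` is again Vandermonde.
-/

open Matrix
open scoped ComplexConjugate InnerProductSpace

theorem Submodule.inner_sub_eq_zero_of_forall_norm_sub_le {𝕜 E : Type*} [RCLike 𝕜]
    [NormedAddCommGroup E] [InnerProductSpace 𝕜 E] (K : Submodule 𝕜 E) {u v : E} (hv : v ∈ K)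
    (hmin : ∀ w ∈ K, ‖u - v‖ ≤ ‖u - w‖) {w : E} (hw : w ∈ K) : ⟪u - v, w⟫_𝕜 = 0 :=
  (K.norm_eq_iInf_iff_inner_eq_zero hv).1
    (le_antisymm (le_ciInf fun w => hmin w w.2)
      (ciInf_le ⟨0, Set.forall_mem_range.2 fun _ => norm_nonneg _⟩ (⟨v, hv⟩ : K))) w hw

theorem eq_zero_of_forall_sum_mul_pow_eq_zero {R : Type*} [CommRing R] [IsDomain R]
    {d N : ℕ} (hdN : d ≤ N + 1) {f v : Fin d → R} (hf : Function.Injective f)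
    (h : ∀ k ≤ N, ∑ i, v i * f i ^ k = 0) : v = 0 :=
  eq_zero_of_forall_pow_sum_mul_pow_eq_zero hf fun i => h i (by omega)

theorem Polynomial.natDegree_one_sub_mul_le {R : Type*} [CommRing R] {q f : R[X]} {n N : ℕ}
    (hq : q.degree ≤ n) (hN : n + f.natDegree ≤ N) : (1 - q * f).natDegree ≤ N := by
  have hqn : q.natDegree ≤ n := natDegree_le_iff_degree_le.2 hq
  have hqf := natDegree_mul_le (p := q) (q := f)
  exact (natDegree_sub_le _ _).trans (max_le (by simp) (by omega))

section WeightedSpace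

variable (ω : ℕ → ℝ) (N : ℕ)

def weightedCoeffs : ℂ[X] →ₗ[ℂ] EuclideanSpace ℂ (Fin (N + 1)) where
  toFun u := WithLp.toLp 2 fun k => (√(ω k) : ℂ) * u.coeff k
  map_add' u v := by ext k; simp [mul_add]
  map_smul' c u := by ext k; simp [mul_left_comm]

/-- `k_N(·, b)` as a polynomial. -/
def kernelPoly (b : ℂ) : ℂ[X] :=
  ∑ k ∈ Finset.range (N + 1), C (conj b ^ k / ω k) * X ^ k

def kernelSum {d : ℕ} (w A : Fin d → ℂ) : ℂ[X] :=
  ∑ i, A i • kernelPoly ω N (w i)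

variable {ω N}

@[simp]
theorem weightedCoeffs_apply (u : ℂ[X]) (k : Fin (N + 1)) :
    weightedCoeffs ω N u k = (√(ω k) : ℂ) * u.coeff k :=
  rfl

theorem inner_weightedCoeffs (hω : ∀ k, 0 ≤ ω k) (u v : ℂ[X]) :
    ⟪weightedCoeffs ω N u, weightedCoeffs ω N v⟫_ℂ =
      ∑ k : Fin (N + 1), (ω k : ℂ) * (conj (u.coeff k) * v.coeff k) := by
  simp only [PiLp.inner_apply, weightedCoeffs_apply, RCLike.inner_apply]
  refine Finset.sum_congr rfl fun k _ => ?_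
  have hsq : (√(ω k) : ℂ) * √(ω k) = ω k := by exact_mod_cast Real.mul_self_sqrt (hω k)
  rw [map_mul, Complex.conj_ofReal, ← hsq]
  ring

theorem norm_weightedCoeffs_sq (hω : ∀ k, 0 ≤ ω k) {u : ℂ[X]} (hu : u.natDegree ≤ N) :
    ‖weightedCoeffs ω N u‖ ^ 2 = wNormSq ω u := by
  rw [EuclideanSpace.norm_sq_eq, wNormSq]
  simp only [weightedCoeffs_apply, norm_mul, mul_pow, Complex.norm_real, Real.norm_eq_abs,
    sq_abs, Real.sq_sqrt (hω _)]
  rw [Fin.sum_univ_eq_sum_range (fun k => ω k * ‖u.coeff k‖ ^ 2)]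
  refine (Finset.sum_subset (Finset.range_subset_range.2 (by omega)) fun k _ hk => ?_).symm
  rw [coeff_eq_zero_of_natDegree_lt (by simpa using hk)]
  simp

theorem coeff_eq_of_weightedCoeffs_eq (hω : ∀ k, 0 < ω k) {u v : ℂ[X]}
    (h : weightedCoeffs ω N u = weightedCoeffs ω N v) {k : ℕ} (hk : k ≤ N) :
    u.coeff k = v.coeff k := by
  have hk' := congrArg (· ⟨k, by omega⟩) h
  simp only [weightedCoeffs_apply] at hk'
  exact mul_left_cancel₀ (by exact_mod_cast (Real.sqrt_pos.2 (hω k)).ne') hk'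

theorem coeff_kernelPoly (b : ℂ) (k : ℕ) :
    (kernelPoly ω N b).coeff k = if k ≤ N then conj b ^ k / ω k else 0 := by
  simp only [kernelPoly, finsetSum_coeff, coeff_C_mul_X_pow]
  rw [Finset.sum_ite_eq]
  simp

theorem natDegree_kernelPoly_le (b : ℂ) : (kernelPoly ω N b).natDegree ≤ N :=
  natDegree_le_iff_coeff_eq_zero.2 fun k hk => by
    rw [coeff_kernelPoly, if_neg (by exact_mod_cast hk.not_ge)]

theorem eval_kernelPoly (z b : ℂ) : (kernelPoly ω N b).eval z = kN ω N z b := by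
  simp only [kernelPoly, kN, eval_finsetSum, eval_mul, eval_C, eval_pow, eval_X]
  exact Finset.sum_congr rfl fun k _ => by ring

theorem inner_weightedCoeffs_kernelPoly (hω : ∀ k, 0 < ω k) (b : ℂ) {u : ℂ[X]}
    (hu : u.natDegree ≤ N) :
    ⟪weightedCoeffs ω N (kernelPoly ω N b), weightedCoeffs ω N u⟫_ℂ = u.eval b := by
  rw [inner_weightedCoeffs (fun k => (hω k).le), eval_eq_sum_range' (Nat.lt_succ_of_le hu),
    ← Fin.sum_univ_eq_sum_range (fun k => u.coeff k * b ^ k)]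
  refine Finset.sum_congr rfl fun k _ => ?_
  have hωk : (ω k : ℂ) ≠ 0 := by exact_mod_cast (hω k).ne'
  rw [coeff_kernelPoly, if_pos (Nat.lt_succ_iff.1 k.2), map_div₀, map_pow, Complex.conj_conj,
    Complex.conj_ofReal]
  field_simp

section KernelSum

variable {d : ℕ} (w A : Fin d → ℂ)

theorem coeff_kernelSum (k : ℕ) :
    (kernelSum ω N w A).coeff k =
      if k ≤ N then 1 / (ω k : ℂ) * ∑ i, A i * conj (w i) ^ k else 0 := by
  simp only [kernelSum, finsetSum_coeff, coeff_smul, coeff_kernelPoly, smul_eq_mul]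
  split_ifs
  · rw [Finset.mul_sum]
    exact Finset.sum_congr rfl fun i _ => by ring
  · simp

theorem natDegree_kernelSum_le : (kernelSum ω N w A).natDegree ≤ N :=
  natDegree_le_iff_coeff_eq_zero.2 fun k hk => by
    rw [coeff_kernelSum, if_neg (by exact_mod_cast hk.not_ge)]

theorem eval_kernelSum (z : ℂ) : (kernelSum ω N w A).eval z = ∑ i, A i * kN ω N z (w i) := by
  simp only [kernelSum, eval_finsetSum, eval_smul, eval_kernelPoly, smul_eq_mul]

theorem inner_weightedCoeffs_kernelSum (hω : ∀ k, 0 < ω k) {u : ℂ[X]} (hu : u.natDegree ≤ N) :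
    ⟪weightedCoeffs ω N (kernelSum ω N w A), weightedCoeffs ω N u⟫_ℂ =
      ∑ i, conj (A i) * u.eval (w i) := by
  simp only [kernelSum, map_sum, map_smul, sum_inner, inner_smul_left,
    inner_weightedCoeffs_kernelPoly hω _ hu]

end KernelSum

end WeightedSpace

theorem IsOPA.inner_weightedCoeffs_eq_zero {ω : ℕ → ℝ} {N n : ℕ} {f p q : ℂ[X]}
    (hω : ∀ k, 0 ≤ ω k) (hp : IsOPA ω f n p) (hN : n + f.natDegree ≤ N) (hq : q.degree ≤ n) :
    ⟪weightedCoeffs ω N (1 - p * f), weightedCoeffs ω N (q * f)⟫_ℂ = 0 := by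
  let K := (degreeLE ℂ n).map (weightedCoeffs ω N ∘ₗ LinearMap.mulRight ℂ f)
  have hmem : ∀ {q : ℂ[X]}, q.degree ≤ n → weightedCoeffs ω N (q * f) ∈ K :=
    fun hq => ⟨_, mem_degreeLE.2 hq, rfl⟩
  have hmin : ∀ v ∈ K, ‖weightedCoeffs ω N 1 - weightedCoeffs ω N (p * f)‖ ≤
      ‖weightedCoeffs ω N 1 - v‖ := by
    rintro _ ⟨q, hq, rfl⟩
    simp only [LinearMap.coe_comp, Function.comp_apply, LinearMap.mulRight_apply, ← map_sub]
    rw [← sq_le_sq₀ (norm_nonneg _) (norm_nonneg _),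
      norm_weightedCoeffs_sq hω (natDegree_one_sub_mul_le hp.1 hN),
      norm_weightedCoeffs_sq hω (natDegree_one_sub_mul_le (mem_degreeLE.1 hq) hN)]
    exact hp.2 q (mem_degreeLE.1 hq)
  simpa only [map_sub] using K.inner_sub_eq_zero_of_forall_norm_sub_le (hmem hp.1) hmin (hmem hq)

section Nodes

variable {ω : ℕ → ℝ} {N d : ℕ} {w : Fin d → ℂ}

theorem gram_weightedCoeffs_kernelPoly (hω : ∀ k, 0 < ω k) :
    gram ℂ (fun i => weightedCoeffs ω N (kernelPoly ω N (w i))) =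
      of fun l m => kN ω N (w l) (w m) := by
  ext l m
  rw [gram, of_apply, of_apply, inner_weightedCoeffs_kernelPoly hω _ (natDegree_kernelPoly_le _),
    eval_kernelPoly]

theorem linearIndependent_weightedCoeffs_kernelPoly (hω : ∀ k, 0 < ω k)
    (hw : Function.Injective w) (hdN : d ≤ N + 1) :
    LinearIndependent ℂ fun i => weightedCoeffs ω N (kernelPoly ω N (w i)) := by
  refine Fintype.linearIndependent_iff.2 fun x hx => congrFun ?_
  have hx' : weightedCoeffs ω N (kernelSum ω N w x) = weightedCoeffs ω N 0 := by
    simpa only [kernelSum, map_sum, map_smul, map_zero] using hx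
  refine eq_zero_of_forall_sum_mul_pow_eq_zero hdN ((starRingEnd ℂ).injective.comp hw)
    fun k hk => ?_
  have hcoeff := coeff_eq_of_weightedCoeffs_eq hω hx' hk
  rw [coeff_kernelSum, if_pos hk, coeff_zero, mul_eq_zero] at hcoeff
  exact hcoeff.resolve_left (by simpa using (hω k).ne')

theorem isUnit_det_kN (hω : ∀ k, 0 < ω k) (hw : Function.Injective w) (hdN : d ≤ N + 1) :
    IsUnit (of fun l m => kN ω N (w l) (w m)).det := by
  rw [← gram_weightedCoeffs_kernelPoly hω]
  exact (det_gram_ne_zero_iff_linearIndependent.2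
    (linearIndependent_weightedCoeffs_kernelPoly hω hw hdN)).isUnit

theorem IsOPA.weightedCoeffs_eq_kernelSum {n : ℕ} {p : ℂ[X]} {A : Fin d → ℂ}
    (hω : ∀ k, 0 < ω k) (hw : Function.Injective w)
    (hp : IsOPA ω (∏ i, (X - C (w i))) n p)
    (hA : (of fun l m => kN ω (n + d) (w l) (w m)) *ᵥ A = fun _ => 1) :
    weightedCoeffs ω (n + d) (1 - p * ∏ i, (X - C (w i))) =
      weightedCoeffs ω (n + d) (kernelSum ω (n + d) w A) := by
  set f : ℂ[X] := ∏ i, (X - C (w i)) with hf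
  set G := kernelSum ω (n + d) w A
  have hfm : f.Monic := monic_prod_of_monic _ _ fun i _ => monic_X_sub_C (w i)
  have hfd : f.natDegree = d := by
    rw [hf, natDegree_prod_of_monic _ _ fun i _ => monic_X_sub_C (w i)]
    simp
  have hfw : ∀ i, f.eval (w i) = 0 := fun i => by
    rw [hf, eval_prod]
    exact Finset.prod_eq_zero (Finset.mem_univ i) (by simp)
  have hdeg : (1 - p * f).natDegree ≤ n + d := natDegree_one_sub_mul_le hp.1 (by omega)
  have hroot : ∀ l, (1 - p * f - G).IsRoot (w l) := fun l => by
    have hGl : G.eval (w l) = 1 := by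
      rw [eval_kernelSum, ← congrFun hA l, mulVec, dotProduct]
      exact Finset.sum_congr rfl fun m _ => mul_comm _ _
    simp [IsRoot, hfw, hGl]
  obtain ⟨r, hr⟩ : f ∣ 1 - p * f - G :=
    Fintype.prod_dvd_of_coprime (pairwise_coprime_X_sub_C hw) fun i => dvd_iff_isRoot.2 (hroot i)
  have hrf : (r * f).natDegree ≤ n + d := by
    rw [mul_comm, ← hr]
    exact (natDegree_sub_le _ _).trans (max_le hdeg (natDegree_kernelSum_le w A))
  have hrdeg : r.degree ≤ n := by
    rcases eq_or_ne r 0 with rfl | hr0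
    · simp
    rw [mul_comm, hfm.natDegree_mul' hr0] at hrf
    exact degree_le_of_natDegree_le (by omega)
  have hself : ⟪weightedCoeffs ω (n + d) (1 - p * f - G),
      weightedCoeffs ω (n + d) (1 - p * f - G)⟫_ℂ = 0 := by
    nth_rewrite 2 [hr]
    rw [mul_comm f r, map_sub, inner_sub_left,
      hp.inner_weightedCoeffs_eq_zero (fun k => (hω k).le) (by omega) hrdeg,
      inner_weightedCoeffs_kernelSum w A hω hrf]
    simp [hfw]
  rwa [inner_self_eq_zero, map_sub, sub_eq_zero] at hself

end Nodes

theorem coefficients_formula_general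
    (ω : ℕ → ℝ) (hω : IsWeight ω) (d : ℕ)
    (z : ℕ → ℂ) (hinj : Set.InjOn z (Set.Icc 1 d))
    (f : Polynomial ℂ)
    (hf : f = ∏ i ∈ Finset.Icc 1 d, (Polynomial.X - Polynomial.C (z i)))
    (p : ℕ → Polynomial ℂ) (hp : ∀ n, IsOPA ω f n (p n)) (n : ℕ)
    (E : Matrix (Fin d) (Fin d) ℂ)
    (hE : E = Matrix.of fun (l m : Fin d) => kN ω (n + d) (z ((l : ℕ) + 1)) (z ((m : ℕ) + 1))) :
    IsUnit E.det ∧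
    (∀ k ≤ n + d, ((1 : Polynomial ℂ) - p n * f).coeff k =
      (1 / (ω k : ℂ)) *
        ∑ i : Fin d, (E⁻¹.mulVec (fun _ => 1)) i * (starRingEnd ℂ (z ((i : ℕ) + 1))) ^ k) ∧
    (∀ A : Fin d → ℂ,
      (∀ k ≤ n + d, ((1 : Polynomial ℂ) - p n * f).coeff k =
        (1 / (ω k : ℂ)) * ∑ i : Fin d, A i * (starRingEnd ℂ (z ((i : ℕ) + 1))) ^ k) →
      A = E⁻¹.mulVec (fun _ => 1)) := by
  have hωpos : ∀ k, 0 < ω k := hω.1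
  set w : Fin d → ℂ := fun i => z (i + 1)
  have hw : Function.Injective w := fun a b hab =>
    Fin.ext (by simpa using hinj ⟨by omega, a.2⟩ ⟨by omega, b.2⟩ hab)
  obtain rfl : f = ∏ i, (X - C (w i)) := by
    rw [hf, Fin.prod_univ_eq_prod_range (fun i => X - C (z (i + 1))), Finset.range_eq_Ico,
      Finset.prod_Ico_add' (fun i => X - C (z i)), zero_add, Finset.Ico_add_one_right_eq_Icc]
  have hdet : IsUnit E.det := hE ▸ isUnit_det_kN hωpos hw (by omega)
  have hEA : E *ᵥ E⁻¹ *ᵥ (fun _ => 1) = fun _ => 1 := by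
    rw [mulVec_mulVec, mul_nonsing_inv _ hdet, one_mulVec]
  have hcoeff : ∀ k ≤ n + d, (1 - p n * ∏ i, (X - C (w i))).coeff k =
      1 / (ω k : ℂ) * ∑ i, (E⁻¹ *ᵥ fun _ => 1) i * conj (w i) ^ k := fun k hk => by
    rw [coeff_eq_of_weightedCoeffs_eq hωpos
      ((hp n).weightedCoeffs_eq_kernelSum hωpos hw (by rw [← hE]; exact hEA)) hk,
      coeff_kernelSum, if_pos hk]
  refine ⟨hdet, hcoeff, fun A hA => sub_eq_zero.1 <| eq_zero_of_forall_sum_mul_pow_eq_zero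
    (N := n + d) (by omega) ((starRingEnd ℂ).injective.comp hw) fun k hk => ?_⟩
  have hsum := (hA k hk).symm.trans (hcoeff k hk)
  rw [mul_right_inj' (by simpa using (hωpos k).ne')] at hsum
  simp only [Pi.sub_apply, sub_mul, Finset.sum_sub_distrib]
  exact sub_eq_zero.2 hsum

/-- Closed formula for the coefficients of `1 - p_n f`. -/
theorem coefficients_formula
    (ω : ℕ → ℝ) (hω : IsWeight ω) (d : ℕ) (hd : 1 ≤ d)
    (z : ℕ → ℂ) (hinj : Set.InjOn z (Set.Icc 1 d))
    (hz : ∀ i, 1 ≤ i → i ≤ d → z i ≠ 0)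
    (f : Polynomial ℂ)
    (hf : f = ∏ i ∈ Finset.Icc 1 d, (Polynomial.X - Polynomial.C (z i)))
    (p : ℕ → Polynomial ℂ) (hp : ∀ n, IsOPA ω f n (p n)) (n : ℕ)
    (E : Matrix (Fin d) (Fin d) ℂ)
    (hE : E = Matrix.of fun (l m : Fin d) => kN ω (n + d) (z ((l : ℕ) + 1)) (z ((m : ℕ) + 1))) :
    IsUnit E.det ∧
    (∀ k ≤ n + d, ((1 : Polynomial ℂ) - p n * f).coeff k =
      (1 / (ω k : ℂ)) *
        ∑ i : Fin d, (E⁻¹.mulVec (fun _ => 1)) i * (starRingEnd ℂ (z ((i : ℕ) + 1))) ^ k) ∧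
    (∀ A : Fin d → ℂ,
      (∀ k ≤ n + d, ((1 : Polynomial ℂ) - p n * f).coeff k =
        (1 / (ω k : ℂ)) * ∑ i : Fin d, A i * (starRingEnd ℂ (z ((i : ℕ) + 1))) ^ k) →
      A = E⁻¹.mulVec (fun _ => 1)) :=
  coefficients_formula_general ω hω d z hinj f hf p hp n E hE
end
end

section
/- Let ω be a weight and let z₁, z₂ ∈ closure(𝔻) with z₁ ≠ z₂. Then k_n(z₁,z₂)/S_n → 0 as n → ∞, where k_n(z₁,z₂) = ∑_{k=0}^n z̄₂^k z₁^k/ω_k and S_n = ∑_{k=0}^n 1/ω_k. -/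
/-!
With `a = z̄₂ z₁` the kernel is `k_n(z₁,z₂) = ∑_{k ≤ n} aᵏ / ω_k`, where `‖a‖ ≤ 1` and `a ≠ 1`
(`|z̄₂ z₁| = 1` forces `|z₂| = 1`, and then `z̄₂ z₁ = 1` gives `z₁ = z₂`). The partial sums of
`∑ aᵏ` are bounded by `2 / |a - 1|` and `1 / ω_k` is monotone, so Abel summation gives
`|k_n| ≤ C (1 + 2 / ω_n)`. Finally `1 / S_n → 0` since `∑ 1 / ω_k` diverges, and
`(1 / ω_n) / S_n → 0` because the last `⌊√n⌋ + 1` terms of `S_n` are all comparable to `1 / ω_n`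
by the condition `ω_n / ω_{n - ⌊√n⌋} → 1`.
-/

open Polynomial Filter Topology MeasureTheory Metric Asymptotics

noncomputable section

open Finset

lemma norm_geom_sum_le_of_norm_le_one {𝕜 : Type*} [NormedField 𝕜] {a : 𝕜} (ha : ‖a‖ ≤ 1)
    (hne : a ≠ 1) (m : ℕ) : ‖∑ j ∈ range m, a ^ j‖ ≤ 2 / ‖a - 1‖ := by
  rw [geom_sum_eq hne, norm_div]
  gcongr
  calc ‖a ^ m - 1‖ ≤ ‖a ^ m‖ + ‖(1 : 𝕜)‖ := norm_sub_le _ _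
    _ ≤ 1 + 1 := by
      rw [norm_pow, norm_one]
      gcongr
      exact pow_le_one₀ (norm_nonneg a) ha
    _ = 2 := one_add_one_eq_two

lemma sum_range_abs_sub_of_monotone_or_antitone {c : ℕ → ℝ} (hc : Monotone c ∨ Antitone c)
    (n : ℕ) : ∑ i ∈ range n, |c (i + 1) - c i| = |c n - c 0| := by
  rcases hc with hc | hc
  · rw [abs_of_nonneg (sub_nonneg.2 (hc n.zero_le)), ← sum_range_sub c n]
    exact sum_congr rfl fun i _ => abs_of_nonneg (sub_nonneg.2 (hc i.le_succ))
  · rw [abs_of_nonpos (sub_nonpos.2 (hc n.zero_le)), ← sum_range_sub c n, ← sum_neg_distrib]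
    exact sum_congr rfl fun i _ => abs_of_nonpos (sub_nonpos.2 (hc i.le_succ))

lemma norm_sum_range_mul_pow_le {𝕜 : Type*} [RCLike 𝕜] {a : 𝕜} (ha : ‖a‖ ≤ 1) (hne : a ≠ 1)
    {c : ℕ → ℝ} (hc : Monotone c ∨ Antitone c) (n : ℕ) :
    ‖∑ k ∈ range (n + 1), (c k : 𝕜) * a ^ k‖ ≤ 2 / ‖a - 1‖ * (|c n| + |c n - c 0|) := by
  have hgeom := norm_geom_sum_le_of_norm_le_one ha hne
  have := sum_range_by_parts (fun k => (c k : 𝕜)) (fun k => a ^ k) (n + 1)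
  simp only [smul_eq_mul, Nat.add_sub_cancel] at this
  rw [this]
  calc _ ≤ ‖(c n : 𝕜) * ∑ i ∈ range (n + 1), a ^ i‖ +
        ‖∑ i ∈ range n, ((c (i + 1) : 𝕜) - c i) * ∑ j ∈ range (i + 1), a ^ j‖ :=
        norm_sub_le _ _
    _ ≤ |c n| * (2 / ‖a - 1‖) + ∑ i ∈ range n, |c (i + 1) - c i| * (2 / ‖a - 1‖) := by
      gcongr
      · rw [norm_mul, RCLike.norm_ofReal]
        gcongr
        exact hgeom _
      · refine (norm_sum_le _ _).trans (sum_le_sum fun i _ => ?_)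
        rw [norm_mul, ← RCLike.ofReal_sub, RCLike.norm_ofReal]
        gcongr
        exact hgeom _
    _ = 2 / ‖a - 1‖ * (|c n| + |c n - c 0|) := by
      rw [← sum_mul, sum_range_abs_sub_of_monotone_or_antitone hc]
      ring

section PartialSums

variable {ω : ℕ → ℝ}

lemma S_pos (hpos : ∀ k, 0 < ω k) (n : ℕ) : 0 < S ω n :=
  sum_pos (fun k _ => one_div_pos.2 (hpos k)) nonempty_range_add_one

lemma tendsto_S_atTop (hpos : ∀ k, 0 < ω k) (hdiv : ¬Summable fun k => 1 / ω k) :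
    Tendsto (S ω) atTop atTop :=
  ((not_summable_iff_tendsto_nat_atTop_of_nonneg fun k => (one_div_pos.2 (hpos k)).le).1
    hdiv).comp (tendsto_add_atTop_nat 1)

/-- Each of the last `r + 1` terms of `S ω n` is at least `1 / (max (ω (n - r) / ω n) 1 * ω n)`. -/
lemma one_div_div_S_le (hpos : ∀ k, 0 < ω k) (hmono : Monotone ω ∨ Antitone ω) {r n : ℕ}
    (hr : r ≤ n) : 1 / ω n / S ω n ≤ max (ω (n - r) / ω n) 1 / (r + 1) := by
  set M := max (ω (n - r) / ω n) 1
  have hM : 0 < M := lt_max_of_lt_right one_pos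
  have hterm : ∀ k ∈ Icc (n - r) n, 1 / (M * ω n) ≤ 1 / ω k := by
    intro k hk
    rw [mem_Icc] at hk
    apply one_div_le_one_div_of_le (hpos k)
    rcases hmono with hmono | hmono
    · calc ω k ≤ ω n := hmono hk.2
        _ ≤ M * ω n := le_mul_of_one_le_left (hpos n).le (le_max_right _ _)
    · calc ω k ≤ ω (n - r) := hmono hk.1
        _ = ω (n - r) / ω n * ω n := (div_mul_cancel₀ _ (hpos n).ne').symm
        _ ≤ M * ω n := by gcongr; exacts [(hpos n).le, le_max_left _ _]
  have hS : (r + 1) / (M * ω n) ≤ S ω n :=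
    calc (r + 1) / (M * ω n) = ∑ k ∈ Icc (n - r) n, 1 / (M * ω n) := by
          rw [sum_const, Nat.card_Icc, nsmul_eq_mul, show n + 1 - (n - r) = r + 1 by omega]
          push_cast
          ring
      _ ≤ ∑ k ∈ Icc (n - r) n, 1 / ω k := sum_le_sum hterm
      _ ≤ S ω n := sum_le_sum_of_subset_of_nonneg
          (fun k hk => mem_range.2 (Nat.lt_succ_of_le (mem_Icc.1 hk).2))
          fun k _ _ => (one_div_pos.2 (hpos k)).le
  have hn := hpos n
  calc 1 / ω n / S ω n ≤ 1 / ω n / ((r + 1) / (M * ω n)) := by gcongr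
    _ = M / (r + 1) := by field_simp

/-- Take `r = ⌊√n⌋` in `one_div_div_S_le`: the weight condition sends the numerator to `1`. -/
lemma IsWeight.tendsto_one_div_div_S (hω : IsWeight ω) :
    Tendsto (fun n => 1 / ω n / S ω n) atTop (𝓝 0) := by
  obtain ⟨hpos, hmono, -, hsqrt, -⟩ := hω
  have hM : Tendsto (fun n => max (ω (n - Nat.sqrt n) / ω n) 1) atTop (𝓝 1) := by
    simpa using (hsqrt.inv₀ one_ne_zero).max (tendsto_const_nhds (x := (1 : ℝ)))
  have hsqrt_atTop : Tendsto (fun n => (Nat.sqrt n : ℝ) + 1) atTop atTop :=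
    tendsto_atTop_add_const_right _ _ <| tendsto_natCast_atTop_atTop.comp <|
      tendsto_atTop_atTop.2 fun b => ⟨b * b, fun n hn => Nat.le_sqrt.2 hn⟩
  refine squeeze_zero (fun n => div_nonneg (one_div_pos.2 (hpos n)).le (S_pos hpos n).le)
    (fun n => one_div_div_S_le hpos hmono (Nat.sqrt_le_self n)) ?_
  simpa using hM.div_atTop hsqrt_atTop

end PartialSums

lemma kN_eq_sum (ω : ℕ → ℝ) (n : ℕ) (z b : ℂ) :
    kN ω n z b = ∑ k ∈ range (n + 1), ((1 / ω k : ℝ) : ℂ) * (starRingEnd ℂ b * z) ^ k := by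
  refine sum_congr rfl fun k _ => ?_
  push_cast
  ring

lemma conj_mul_ne_one {z₁ z₂ : ℂ} (h₁ : ‖z₁‖ ≤ 1) (h₂ : ‖z₂‖ ≤ 1) (hne : z₁ ≠ z₂) :
    starRingEnd ℂ z₂ * z₁ ≠ 1 := by
  intro h
  have hz₂ : ‖z₂‖ = 1 := by
    refine le_antisymm h₂ ?_
    calc 1 = ‖z₂‖ * ‖z₁‖ := by rw [← Complex.norm_conj z₂, ← norm_mul, h, norm_one]
      _ ≤ ‖z₂‖ := mul_le_of_le_one_right (norm_nonneg _) h₁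
  apply hne
  calc z₁ = z₂ * (starRingEnd ℂ z₂ * z₁) := by
        rw [← mul_assoc, Complex.mul_conj, Complex.normSq_eq_norm_sq, hz₂]
        simp
    _ = z₂ := by rw [h, mul_one]

lemma norm_kN_le {ω : ℕ → ℝ} (hpos : ∀ k, 0 < ω k) (hmono : Monotone ω ∨ Antitone ω)
    (hω0 : ω 0 = 1) {z₁ z₂ : ℂ} (h₁ : ‖z₁‖ ≤ 1) (h₂ : ‖z₂‖ ≤ 1) (hne : z₁ ≠ z₂) (n : ℕ) :
    ‖kN ω n z₁ z₂‖ ≤ 2 / ‖starRingEnd ℂ z₂ * z₁ - 1‖ * (1 + 2 / ω n) := by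
  have ha : ‖starRingEnd ℂ z₂ * z₁‖ ≤ 1 := by
    simpa using mul_le_one₀ h₂ (norm_nonneg _) h₁
  have hc : Monotone (fun k => 1 / ω k) ∨ Antitone (fun k => 1 / ω k) := by
    rcases hmono with hmono | hmono
    · exact Or.inr fun k l hkl => one_div_le_one_div_of_le (hpos k) (hmono hkl)
    · exact Or.inl fun k l hkl => one_div_le_one_div_of_le (hpos l) (hmono hkl)
  have hvar : |1 / ω n| + |1 / ω n - 1 / ω 0| ≤ 1 + 2 / ω n := by
    have hn : 0 < 1 / ω n := one_div_pos.2 (hpos n)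
    have hsub : |1 / ω n - 1| ≤ 1 / ω n + 1 := abs_sub_le_iff.2 ⟨by linarith, by linarith⟩
    rw [hω0, div_one, abs_of_pos hn]
    linarith [show 2 / ω n = 2 * (1 / ω n) by ring]
  rw [kN_eq_sum]
  refine (norm_sum_range_mul_pow_le ha (conj_mul_ne_one h₁ h₂ hne) hc n).trans ?_
  gcongr

/-- `k_n(z₁,z₂)/S_n → 0` for distinct points of the closed disk. -/
theorem kernel_small (ω : ℕ → ℝ) (hω : IsWeight ω) (z₁ z₂ : ℂ)
    (h₁ : z₁ ∈ Metric.closedBall (0 : ℂ) 1) (h₂ : z₂ ∈ Metric.closedBall (0 : ℂ) 1)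
    (hne : z₁ ≠ z₂) :
    Filter.Tendsto (fun n => kN ω n z₁ z₂ / (S ω n : ℂ)) Filter.atTop (nhds 0) := by
  have hrat := hω.tendsto_one_div_div_S
  obtain ⟨hpos, hmono, hω0, -, hdiv⟩ := hω
  rw [Metric.mem_closedBall, dist_zero_right] at h₁ h₂
  set C := 2 / ‖starRingEnd ℂ z₂ * z₁ - 1‖
  have hbound : ∀ n, ‖kN ω n z₁ z₂ / S ω n‖ ≤ C * ((S ω n)⁻¹ + 2 * (1 / ω n / S ω n)) := by
    intro n
    rw [norm_div, Complex.norm_real, Real.norm_of_nonneg (S_pos hpos n).le]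
    calc _ ≤ C * (1 + 2 / ω n) / S ω n :=
          div_le_div_of_nonneg_right (norm_kN_le hpos hmono hω0 h₁ h₂ hne n) (S_pos hpos n).le
      _ = _ := by ring
  rw [tendsto_zero_iff_norm_tendsto_zero]
  refine squeeze_zero (fun n => norm_nonneg _) hbound ?_
  simpa using (((tendsto_S_atTop hpos hdiv).inv_tendsto_atTop.add
    (hrat.const_mul 2)).const_mul C)

end
end

section
/- Let ω be a weight, let f be a nonzero polynomial, and let p_n be the n-th optimal polynomial approximant to 1/f in H²_ω. Then the constant coefficient of 1 − p_n f equals the squared H²_ω norm of 1 − p_n f: coeff₀(1 − p_n f) = ∑_k ω_k |coeff_k(1 − p_n f)|². In particular this constant coefficient is a nonnegative real number. -/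
open Polynomial Filter Topology MeasureTheory Metric Asymptotics

noncomputable section

/- `p_n f` is the orthogonal projection of `1` onto `{q f : deg q ≤ n}`, so
`g = 1 - p_n f` is orthogonal to `p_n f` in `H²_ω`. Hence
`g(0) = ω₀ g(0) = ⟨g, 1⟩ = ⟨g, g⟩ + ⟨g, p_n f⟩ = ‖g‖²_ω`. -/

section WeightedInner

open ComplexConjugate

lemma sum_mul_norm_sub_mul_sq {ι : Type*} (s : Finset ι) (w : ι → ℝ) (a b : ι → ℂ) (c : ℂ) :
    ∑ k ∈ s, w k * ‖a k - c * b k‖ ^ 2 =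
      ∑ k ∈ s, w k * ‖a k‖ ^ 2 - 2 * (conj c * ∑ k ∈ s, (w k : ℂ) * a k * conj (b k)).re +
        Complex.normSq c * ∑ k ∈ s, w k * ‖b k‖ ^ 2 := by
  rw [Finset.mul_sum, Complex.re_sum, Finset.mul_sum, Finset.mul_sum, ← Finset.sum_sub_distrib,
    ← Finset.sum_add_distrib]
  refine Finset.sum_congr rfl fun k _ => ?_
  simp only [Complex.sq_norm, Complex.normSq_apply, Complex.mul_re, Complex.mul_im,
    Complex.sub_re, Complex.sub_im, Complex.conj_re, Complex.conj_im,
    Complex.ofReal_re, Complex.ofReal_im]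
  ring

lemma eq_zero_of_forall_le_sub_re_add_normSq {S T : ℝ} {A : ℂ}
    (h : ∀ c : ℂ, S ≤ S - 2 * (conj c * A).re + Complex.normSq c * T) : A = 0 := by
  -- At `c = t A` with `t = 1 / (|T| + 1)` the linear term `-2 t |A|²` beats the quadratic one.
  by_contra hA
  have hnA : 0 < Complex.normSq A := Complex.normSq_pos.mpr hA
  set t : ℝ := 1 / (|T| + 1)
  have ht : 0 < t := by positivity
  have htT : t * |T| < 1 := by
    rw [div_mul_eq_mul_div, one_mul, div_lt_one (by positivity)]; linarith
  have hc := h (t * A)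
  have hre : (conj ((t : ℂ) * A) * A).re = t * Complex.normSq A := by
    rw [map_mul, Complex.conj_ofReal, mul_assoc, Complex.re_ofReal_mul,
      ← Complex.normSq_eq_conj_mul_self]
    simp
  rw [hre, Complex.normSq_mul, Complex.normSq_ofReal] at hc
  nlinarith [le_abs_self T, mul_pos ht hnA, mul_le_mul_of_nonneg_left (le_abs_self T)
    (le_of_lt (mul_pos (mul_pos ht ht) hnA))]

variable (ω : ℕ → ℝ) (N : ℕ)

/-- The `H²_ω` inner product, computed on the coefficients of index `< N`. -/
def wInner (g h : ℂ[X]) : ℂ :=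
  ∑ k ∈ Finset.range N, (ω k : ℂ) * g.coeff k * conj (h.coeff k)

variable {ω N}

lemma wNormSq_eq_sum_range {g : ℂ[X]} (hg : g.natDegree < N) :
    wNormSq ω g = ∑ k ∈ Finset.range N, ω k * ‖g.coeff k‖ ^ 2 := by
  refine Finset.sum_subset (fun k hk => ?_) fun k _ hk => ?_
  · simp only [Finset.mem_range] at hk ⊢; omega
  · simp only [Finset.mem_range, not_lt] at hk
    simp [coeff_eq_zero_of_natDegree_lt (Nat.lt_of_lt_of_le (Nat.lt_succ_self _) hk)]

lemma wInner_self_eq_wNormSq {g : ℂ[X]} (hg : g.natDegree < N) :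
    wInner ω N g g = wNormSq ω g := by
  rw [wNormSq_eq_sum_range hg, wInner, Complex.ofReal_sum]
  refine Finset.sum_congr rfl fun k _ => ?_
  rw [mul_assoc, Complex.mul_conj, Complex.normSq_eq_norm_sq]
  push_cast; ring

lemma wInner_add_right (g h₁ h₂ : ℂ[X]) :
    wInner ω N g (h₁ + h₂) = wInner ω N g h₁ + wInner ω N g h₂ := by
  simp only [wInner, coeff_add, map_add, mul_add, Finset.sum_add_distrib]

lemma wInner_one_right (hω : ω 0 = 1) (hN : 0 < N) (g : ℂ[X]) : wInner ω N g 1 = g.coeff 0 := by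
  rw [wInner, Finset.sum_eq_single_of_mem 0 (Finset.mem_range.mpr hN) fun k _ hk => by
    simp [coeff_one, hk]]
  simp [hω]

end WeightedInner

lemma IsOPA.wInner_eq_zero {ω : ℕ → ℝ} {f p q : ℂ[X]} {n N : ℕ} (hp : IsOPA ω f n p)
    (hq : q.degree ≤ n) (hpN : (1 - p * f).natDegree < N) (hqN : (q * f).natDegree < N) :
    wInner ω N (1 - p * f) (q * f) = 0 := by
  refine eq_zero_of_forall_le_sub_re_add_normSq
    (S := ∑ k ∈ Finset.range N, ω k * ‖(1 - p * f).coeff k‖ ^ 2)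
    (T := ∑ k ∈ Finset.range N, ω k * ‖(q * f).coeff k‖ ^ 2) fun c => ?_
  have hperturb : 1 - (p + c • q) * f = (1 - p * f) - c • (q * f) := by
    rw [add_mul, smul_mul_assoc]; ring
  have hdeg : ((1 - p * f) - c • (q * f)).natDegree < N :=
    (natDegree_sub_le _ _).trans_lt (max_lt hpN ((natDegree_smul_le _ _).trans_lt hqN))
  have hmin := hp.2 (p + c • q) ((degree_add_le _ _).trans
    (max_le hp.1 ((degree_smul_le _ _).trans hq)))
  rw [hperturb, wNormSq_eq_sum_range hpN, wNormSq_eq_sum_range hdeg] at hmin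
  simpa only [coeff_sub, coeff_smul, smul_eq_mul, sum_mul_norm_sub_mul_sq, wInner] using hmin

theorem constant_coefficient_eq_normSq_general
    (ω : ℕ → ℝ) (hω : IsWeight ω) (f : Polynomial ℂ)
    (p : ℕ → Polynomial ℂ) (hp : ∀ n, IsOPA ω f n (p n)) (n : ℕ) :
    ((1 : Polynomial ℂ) - p n * f).coeff 0 = (wNormSq ω (1 - p n * f) : ℂ) := by
  set g := 1 - p n * f
  set N := max g.natDegree (p n * f).natDegree + 1
  have hgN : g.natDegree < N := Nat.lt_succ_of_le (le_max_left _ _)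
  have horth : wInner ω N g (p n * f) = 0 :=
    (hp n).wInner_eq_zero (hp n).1 hgN (Nat.lt_succ_of_le (le_max_right _ _))
  calc g.coeff 0 = wInner ω N g (g + p n * f) := by
        rw [sub_add_cancel, wInner_one_right hω.2.2.1 (Nat.succ_pos _)]
    _ = wNormSq ω g := by rw [wInner_add_right, horth, add_zero, wInner_self_eq_wNormSq hgN]

/-- The constant coefficient of `1 - p_n f` equals its squared `H²_ω` norm. -/
theorem constant_coefficient_eq_normSq
    (ω : ℕ → ℝ) (hω : IsWeight ω) (f : Polynomial ℂ) (hf : f ≠ 0)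
    (p : ℕ → Polynomial ℂ) (hp : ∀ n, IsOPA ω f n (p n)) (n : ℕ) :
    ((1 : Polynomial ℂ) - p n * f).coeff 0 = (wNormSq ω (1 - p n * f) : ℂ) :=
  constant_coefficient_eq_normSq_general ω hω f p hp n

end
end
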